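/- arXiv:2105.03825 — 7 statements merged into one kernel-verified Lean document; each statement's English description precedes it below -/
import Mathlib

section
/- Let $s_1, s_2, r$ be real numbers with $0 \le s_2 \le s_1$, $0 < r \le (s_1+s_2)/2$, and $s_1 + s_2 \ge 2$. Then for every $t$ with $-1 < t \le 1$ and every real $x \ge 0$, one has $(1+t)\sinh(rx) \le r(\sinh(s_1 x) + t\sinh(s_2 x))$. -/
/-! Write `c = (s₁ + s₂) / 2 ≥ 1`. Convexity of `sinh` on `[0, ∞)` makes `u ↦ sinh (u x) / u`
increasing, so `sinh (r x) ≤ (r / c) sinh (c x) ≤ r sinh (c x)`, and the sum-to-product formula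
gives `sinh (s₁ x) + sinh (s₂ x) ≥ 2 sinh (c x)`. The right-hand side minus the left-hand side is
`(1 + t) (r (sinh (s₁ x) + sinh (s₂ x)) / 2 - sinh (r x)) + (1 - t) r (sinh (s₁ x) - sinh (s₂ x)) / 2`,
a sum of two nonnegative terms. -/

open Real Set

namespace Real

theorem convexOn_sinh_Ici : ConvexOn ℝ (Ici 0) sinh := by
  refine MonotoneOn.convexOn_of_deriv (convex_Ici 0) continuous_sinh.continuousOn
    differentiable_sinh.differentiableOn ?_
  rw [deriv_sinh, interior_Ici]
  exact cosh_strictMonoOn.monotoneOn.mono Ioi_subset_Ici_self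

theorem sinh_mul_le_mul_sinh {l u : ℝ} (hl0 : 0 ≤ l) (hl1 : l ≤ 1) (hu : 0 ≤ u) :
    sinh (l * u) ≤ l * sinh u := by
  simpa using convexOn_sinh_Ici.2 (mem_Ici.2 hu) (mem_Ici.2 le_rfl) hl0 (sub_nonneg.2 hl1)
    (by ring)

theorem mul_sinh_mul_le_mul_mul_sinh {a c u : ℝ} (ha : 0 ≤ a) (hac : a ≤ c) (hu : 0 ≤ u) :
    c * sinh (a * u) ≤ a * sinh (c * u) := by
  rcases hac.eq_or_lt with rfl | hac
  · rfl
  have hc : 0 < c := ha.trans_lt hac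
  have key := sinh_mul_le_mul_sinh (div_nonneg ha hc.le) ((div_le_one hc).2 hac.le)
    (mul_nonneg hc.le hu)
  rw [show a / c * (c * u) = a * u by field_simp] at key
  calc c * sinh (a * u) ≤ c * (a / c * sinh (c * u)) := mul_le_mul_of_nonneg_left key hc.le
    _ = a * sinh (c * u) := by field_simp

theorem two_mul_sinh_le_sinh_add_add_sinh_sub {u : ℝ} (hu : 0 ≤ u) (v : ℝ) :
    2 * sinh u ≤ sinh (u + v) + sinh (u - v) := by
  have sum_to_product : sinh (u + v) + sinh (u - v) = 2 * sinh u * cosh v := by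
    rw [sinh_add, sinh_sub]; ring
  rw [sum_to_product]
  exact le_mul_of_one_le_right (by positivity) (one_le_cosh v)

end Real

theorem stmt_2_general (s₁ s₂ r t x : ℝ) (h21 : s₂ ≤ s₁)
    (hr0 : 0 < r) (hr : r ≤ (s₁ + s₂) / 2) (hs : 2 ≤ s₁ + s₂)
    (ht1 : -1 < t) (ht2 : t ≤ 1) (hx : 0 ≤ x) :
    (1 + t) * Real.sinh (r * x) ≤ r * (Real.sinh (s₁ * x) + t * Real.sinh (s₂ * x)) := by
  set c := (s₁ + s₂) / 2 with hc_def
  have hc : 1 ≤ c := by linarith [hc_def]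
  have hrx : 0 ≤ sinh (r * x) := sinh_nonneg_iff.2 (mul_nonneg hr0.le hx)
  have hr_c : sinh (r * x) ≤ r * sinh (c * x) :=
    (le_mul_of_one_le_left hrx hc).trans (mul_sinh_mul_le_mul_mul_sinh hr0.le hr hx)
  have hc_sum : 2 * sinh (c * x) ≤ sinh (s₁ * x) + sinh (s₂ * x) := by
    have h :=
      two_mul_sinh_le_sinh_add_add_sinh_sub (by positivity : 0 ≤ c * x) ((s₁ - s₂) / 2 * x)
    rwa [show c * x + (s₁ - s₂) / 2 * x = s₁ * x by ring,
      show c * x - (s₁ - s₂) / 2 * x = s₂ * x by ring] at h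
  have hsum : 2 * sinh (r * x) ≤ r * (sinh (s₁ * x) + sinh (s₂ * x)) := by
    linarith [mul_le_mul_of_nonneg_left hc_sum hr0.le]
  have hdiff : sinh (s₂ * x) ≤ sinh (s₁ * x) :=
    sinh_le_sinh.2 (mul_le_mul_of_nonneg_right h21 hx)
  linarith [mul_le_mul_of_nonneg_left hsum (by linarith : 0 ≤ 1 + t),
    mul_le_mul_of_nonneg_left hdiff (mul_nonneg hr0.le (by linarith : 0 ≤ 1 - t))]

theorem stmt_2 (s₁ s₂ r t x : ℝ) (h2 : 0 ≤ s₂) (h21 : s₂ ≤ s₁)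
    (hr0 : 0 < r) (hr : r ≤ (s₁ + s₂) / 2) (hs : 2 ≤ s₁ + s₂)
    (ht1 : -1 < t) (ht2 : t ≤ 1) (hx : 0 ≤ x) :
    (1 + t) * Real.sinh (r * x) ≤ r * (Real.sinh (s₁ * x) + t * Real.sinh (s₂ * x)) :=
  stmt_2_general s₁ s₂ r t x h21 hr0 hr hs ht1 ht2 hx
end

section
/- For all real $\nu$ with $5/16 \le \nu \le 11/16$, all $\beta$ with $1/2 \le \beta \le 1$, and all real $x$, one has $\cosh((2\nu-1)x) \le (1-\beta)\cosh(x/4) + \beta\cosh(x/2)$. -/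
/-!
Since `|2ν - 1| ≤ 3/8`, the left side is at most `cosh (3x/8)`. As `3x/8` is the midpoint of
`x/4` and `x/2`, it is at most `(cosh (x/4) + cosh (x/2)) / 2` by the sum-to-product formula,
and since `cosh (x/4) ≤ cosh (x/2)`, shifting weight `β ≥ 1/2` onto the larger term only helps.
-/

open Real

lemma Real.cosh_mul_le_cosh_mul {a b : ℝ} (h : |a| ≤ |b|) (x : ℝ) :
    cosh (a * x) ≤ cosh (b * x) := by
  rw [cosh_le_cosh, abs_mul, abs_mul]
  exact mul_le_mul_of_nonneg_right h (abs_nonneg x)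

lemma Real.cosh_midpoint_le (s t : ℝ) : cosh ((s + t) / 2) ≤ (cosh s + cosh t) / 2 := by
  set m := (s + t) / 2
  set d := (s - t) / 2
  have hsum : cosh s + cosh t = 2 * cosh m * cosh d := by
    rw [show s = m + d by ring, show t = m - d by ring, cosh_add, cosh_sub]
    ring
  rw [hsum]
  nlinarith [cosh_pos m, one_le_cosh d]

lemma midpoint_le_convex_comb_of_le {u v β : ℝ} (huv : u ≤ v) (hβ : 1 / 2 ≤ β) :
    (u + v) / 2 ≤ (1 - β) * u + β * v := by
  nlinarith

theorem stmt_4_general (ν β x : ℝ) (hν1 : 5/16 ≤ ν) (hν2 : ν ≤ 11/16)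
    (hβ1 : 1/2 ≤ β) :
    Real.cosh ((2*ν - 1) * x) ≤ (1 - β) * Real.cosh (x / 4) + β * Real.cosh (x / 2) := by
  have hν : |2 * ν - 1| ≤ |3 / 8| := by
    rw [abs_of_pos (by norm_num : (0 : ℝ) < 3 / 8)]
    exact abs_le.2 ⟨by linarith, by linarith⟩
  have hquarter : |(1 / 4 : ℝ)| ≤ |1 / 2| := by norm_num [abs_of_pos]
  calc cosh ((2 * ν - 1) * x)
      ≤ cosh (3 / 8 * x) := cosh_mul_le_cosh_mul hν x
    _ = cosh ((x / 4 + x / 2) / 2) := by ring_nf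
    _ ≤ (cosh (x / 4) + cosh (x / 2)) / 2 := cosh_midpoint_le _ _
    _ ≤ (1 - β) * cosh (x / 4) + β * cosh (x / 2) := by
      refine midpoint_le_convex_comb_of_le ?_ hβ1
      simpa only [one_div, inv_mul_eq_div] using cosh_mul_le_cosh_mul hquarter x

theorem stmt_4 (ν β x : ℝ) (hν1 : 5/16 ≤ ν) (hν2 : ν ≤ 11/16)
    (hβ1 : 1/2 ≤ β) (hβ2 : β ≤ 1) :
    Real.cosh ((2*ν - 1) * x) ≤ (1 - β) * Real.cosh (x / 4) + β * Real.cosh (x / 2) :=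
  stmt_4_general ν β x hν1 hν2 hβ1
end

section
/- For all real $\gamma, \beta$ with $1/2 \le \gamma, \beta \le 1$ and all real $x$, one has $(1-\gamma)\cosh(x/4) + \gamma\cosh(3x/8) \le (1-\beta)\cosh(x/4) + \beta\cosh(x/2)$. -/
/-!
Write `c t = cosh (t x)`. Since `cosh` is even and increasing on `[0, ∞)`, `c (1/4) ≤ c (3/8)`,
and since `cosh` is convex, `c (3/8) ≤ (c (1/4) + c (1/2)) / 2`. Hence moving weight `γ ≤ 1`
from `c (1/4)` to `c (3/8)` gains at most `c (3/8) - c (1/4) ≤ (c (1/2) - c (1/4)) / 2`, which is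
at most what moving weight `β ≥ 1/2` from `c (1/4)` to `c (1/2)` gains.
-/

open Real

theorem Real.cosh_le_cosh_add_add_cosh_sub_div_two (m d : ℝ) :
    cosh m ≤ (cosh (m + d) + cosh (m - d)) / 2 := by
  have h : (cosh (m + d) + cosh (m - d)) / 2 = cosh m * cosh d := by
    rw [cosh_add, cosh_sub]; ring
  rw [h]
  exact le_mul_of_one_le_right (cosh_pos m).le (one_le_cosh d)

theorem one_sub_mul_add_mul_le_of_two_mul_le {p q r γ β : ℝ} (hpq : p ≤ q)
    (hmid : 2 * q ≤ p + r) (hγ : γ ≤ 1) (hβ : 1 / 2 ≤ β) :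
    (1 - γ) * p + γ * q ≤ (1 - β) * p + β * r :=
  calc (1 - γ) * p + γ * q = p + γ * (q - p) := by ring
    _ ≤ p + (q - p) := by nlinarith
    _ ≤ p + β * (r - p) := by nlinarith
    _ = (1 - β) * p + β * r := by ring

theorem stmt_6_general (γ β x : ℝ) (hγ2 : γ ≤ 1)
    (hβ1 : 1/2 ≤ β) :
    (1 - γ) * Real.cosh (x/4) + γ * Real.cosh (3*x/8) ≤
      (1 - β) * Real.cosh (x/4) + β * Real.cosh (x/2) := by
  have hmono : cosh (x / 4) ≤ cosh (3 * x / 8) := by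
    rw [cosh_le_cosh, abs_div, abs_div, abs_mul]
    norm_num
    linarith [abs_nonneg x]
  have hconvex : 2 * cosh (3 * x / 8) ≤ cosh (x / 4) + cosh (x / 2) := by
    have h := cosh_le_cosh_add_add_cosh_sub_div_two (3 * x / 8) (x / 8)
    rw [show 3 * x / 8 + x / 8 = x / 2 by ring, show 3 * x / 8 - x / 8 = x / 4 by ring] at h
    linarith
  exact one_sub_mul_add_mul_le_of_two_mul_le hmono hconvex hγ2 hβ1

theorem stmt_6 (γ β x : ℝ) (hγ1 : 1/2 ≤ γ) (hγ2 : γ ≤ 1)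
    (hβ1 : 1/2 ≤ β) (hβ2 : β ≤ 1) :
    (1 - γ) * Real.cosh (x/4) + γ * Real.cosh (3*x/8) ≤
      (1 - β) * Real.cosh (x/4) + β * Real.cosh (x/2) :=
  stmt_6_general γ β x hγ2 hβ1
end

section
/- For all real $\nu$ with $1/4 < \nu < 3/4$ and all real $x$, one has $\cosh((2\nu-1)x) \le \tfrac{1}{2}\cosh(3x/4) + \tfrac{1}{2}\cosh(x/4)$. -/
/-! Since `|2ν - 1| < 1/2`, monotonicity of `cosh` in `|x|` gives
`cosh ((2ν - 1) x) ≤ cosh (x/2) ≤ cosh (x/2) cosh (x/4)`, and the product formula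
`2 cosh a cosh b = cosh (a + b) + cosh (a - b)` turns the last term into the right-hand side. -/

namespace Real

theorem cosh_add_add_cosh_sub (x y : ℝ) : cosh (x + y) + cosh (x - y) = 2 * cosh x * cosh y := by
  rw [cosh_add, cosh_sub]
  ring

theorem le_cosh_mul_cosh (x y : ℝ) : cosh x ≤ cosh x * cosh y :=
  le_mul_of_one_le_right (cosh_pos x).le (one_le_cosh y)

theorem cosh_mul_le_cosh_mul_s7 {c d : ℝ} (h : |c| ≤ |d|) (x : ℝ) : cosh (c * x) ≤ cosh (d * x) := by
  rw [cosh_le_cosh, abs_mul, abs_mul]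
  exact mul_le_mul_of_nonneg_right h (abs_nonneg x)

end Real

theorem stmt_7 (ν x : ℝ) (hν1 : 1/4 < ν) (hν2 : ν < 3/4) :
    Real.cosh ((2*ν - 1) * x) ≤ (1/2) * Real.cosh (3*x/4) + (1/2) * Real.cosh (x/4) := by
  have hc : |2*ν - 1| ≤ |(1/2 : ℝ)| := by
    rw [abs_le, abs_of_pos one_half_pos]
    constructor <;> linarith
  have hprod := Real.cosh_add_add_cosh_sub (x/2) (x/4)
  rw [show x/2 + x/4 = 3*x/4 by ring, show x/2 - x/4 = x/4 by ring] at hprod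
  calc Real.cosh ((2*ν - 1) * x) ≤ Real.cosh (1/2 * x) := Real.cosh_mul_le_cosh_mul_s7 hc x
    _ = Real.cosh (x/2) := by ring_nf
    _ ≤ Real.cosh (x/2) * Real.cosh (x/4) := Real.le_cosh_mul_cosh _ _
    _ = (1/2) * Real.cosh (3*x/4) + (1/2) * Real.cosh (x/4) := by linarith
end

section
/- For every real $x \ne 0$, one has $\tfrac{1}{2}\cosh(3x/4) + \tfrac{1}{2}\cosh(x/4) \le \sinh(x)/x$, and the inequality holds with value $1$ on both sides at $x = 0$ (i.e., $x\,(\cosh(3x/4)+\cosh(x/4))/2 \le \sinh(x)$ for all $x \ge 0$). -/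
/-!
With `t = x / 4`, the sum-to-product formula gives `cosh 3t + cosh t = 2 cosh 2t cosh t`, and
`sinh 4t = 4 cosh 2t cosh t sinh t`. Hence `sinh x - x (cosh 3t + cosh t) / 2` factors as
`4 cosh 2t cosh t (sinh t - t)`, and `sinh t - t` has the sign of `t`.
-/

open Real

lemma cosh_three_mul_add_cosh (t : ℝ) : cosh (3 * t) + cosh t = 2 * cosh (2 * t) * cosh t :=
  calc cosh (3 * t) + cosh t = cosh (2 * t + t) + cosh (2 * t - t) := by ring_nf
    _ = 2 * cosh (2 * t) * cosh t := by rw [cosh_add, cosh_sub]; ring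

lemma sinh_sub_mul_cosh_avg (x : ℝ) :
    sinh x - x * ((cosh (3 * x / 4) + cosh (x / 4)) / 2)
      = 4 * cosh (x / 2) * cosh (x / 4) * (sinh (x / 4) - x / 4) := by
  obtain ⟨t, rfl⟩ : ∃ t, x = 4 * t := ⟨x / 4, by ring⟩
  have h4 : 4 * t = 2 * (2 * t) := by ring
  have h3 : 3 * (4 * t) / 4 = 3 * t := by ring
  have h2 : 4 * t / 2 = 2 * t := by ring
  rw [h3, h2, mul_div_cancel_left₀ t four_ne_zero, cosh_three_mul_add_cosh, h4, sinh_two_mul,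
    sinh_two_mul]
  ring

lemma sinh_sub_self_div_self_nonneg (y : ℝ) : 0 ≤ (sinh y - y) / y := by
  rcases le_total 0 y with hy | hy
  · exact div_nonneg (sub_nonneg.2 (self_le_sinh_iff.2 hy)) hy
  · exact div_nonneg_of_nonpos (sub_nonpos.2 (sinh_le_self_iff.2 hy)) hy

theorem stmt_8 :
    (∀ x : ℝ, x ≠ 0 →
      (1/2) * Real.cosh (3*x/4) + (1/2) * Real.cosh (x/4) ≤ Real.sinh x / x) ∧
    (∀ x : ℝ, 0 ≤ x →
      x * ((Real.cosh (3*x/4) + Real.cosh (x/4)) / 2) ≤ Real.sinh x) := by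
  refine ⟨fun x hx => sub_nonneg.1 ?_, fun x hx => sub_nonneg.1 ?_⟩
  · have hdiv : sinh x / x - ((1/2) * cosh (3*x/4) + (1/2) * cosh (x/4))
        = cosh (x/2) * cosh (x/4) * ((sinh (x/4) - x/4) / (x/4)) := by
      have key := sinh_sub_mul_cosh_avg x
      -- otherwise `field_simp` also normalizes the arguments `3*x/4` inside `cosh`
      generalize sinh x = s, cosh (3*x/4) = a, cosh (x/4) = b, cosh (x/2) = c, sinh (x/4) = d
        at key ⊢
      field_simp
      linear_combination 2 * key
    rw [hdiv]
    exact mul_nonneg (by positivity) (sinh_sub_self_div_self_nonneg _)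
  · rw [sinh_sub_mul_cosh_avg]
    exact mul_nonneg (by positivity) (sub_nonneg.2 (self_le_sinh_iff.2 (by positivity)))
end

section
/- For every real $x \ne 0$, $\dfrac{\sinh x}{x} \le \tfrac{1}{2}\cosh(x/2) + \tfrac{1}{4}(1+\cosh x)$; equivalently, for all $x \ge 0$, $4\sinh(x) \le x\,(2\cosh(x/2) + 1 + \cosh x)$. -/
/-!
Put `y = x / 2`. Since `1 + cosh x = 2 cosh² y` and `sinh x = 2 sinh y cosh y`, the second claim
is, after cancelling `4 cosh y > 0`, the inequality `2 sinh y ≤ y (1 + cosh y)`. Halving once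
more turns this into `sinh z ≤ z cosh z` for `z = y / 2`, i.e. `tanh z ≤ z`, which holds because
`z cosh z - sinh z` vanishes at `0` and has derivative `z sinh z ≥ 0`. The first claim is the
second divided by `4x`, after reducing to `x > 0` by evenness.
-/

namespace Real

theorem monotoneOn_mul_cosh_sub_sinh : MonotoneOn (fun x ↦ x * cosh x - sinh x) (Set.Ici 0) := by
  refine monotoneOn_of_hasDerivWithinAt_nonneg (f' := fun x ↦ x * sinh x) (convex_Ici 0)
    (by fun_prop) (fun x _ ↦ ?_) (fun x hx ↦ ?_)
  · have h := ((hasDerivAt_id x).mul (hasDerivAt_cosh x)).sub (hasDerivAt_sinh x)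
    exact (h.congr_deriv (by simp)).hasDerivWithinAt
  · rw [interior_Ici, Set.mem_Ioi] at hx
    exact mul_nonneg hx.le (sinh_nonneg_iff.mpr hx.le)

theorem sinh_le_mul_cosh {x : ℝ} (hx : 0 ≤ x) : sinh x ≤ x * cosh x := by
  have h := monotoneOn_mul_cosh_sub_sinh Set.self_mem_Ici hx hx
  simp only [zero_mul, sinh_zero, sub_zero] at h
  linarith

theorem one_add_cosh_two_mul (x : ℝ) : 1 + cosh (2 * x) = 2 * cosh x ^ 2 := by
  rw [cosh_two_mul, cosh_sq]
  ring

theorem two_mul_sinh_le_mul_one_add_cosh {x : ℝ} (hx : 0 ≤ x) :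
    2 * sinh x ≤ x * (1 + cosh x) := by
  obtain ⟨z, rfl⟩ : ∃ z, x = 2 * z := ⟨x / 2, by ring⟩
  have hz := sinh_le_mul_cosh (x := z) (by linarith)
  have hc := cosh_pos z
  rw [sinh_two_mul, one_add_cosh_two_mul]
  nlinarith [mul_le_mul_of_nonneg_left hz hc.le]

theorem four_mul_sinh_le {x : ℝ} (hx : 0 ≤ x) :
    4 * sinh x ≤ x * (2 * cosh (x / 2) + 1 + cosh x) := by
  obtain ⟨y, rfl⟩ : ∃ y, x = 2 * y := ⟨x / 2, by ring⟩
  have hy := two_mul_sinh_le_mul_one_add_cosh (x := y) (by linarith)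
  have hc := cosh_pos y
  rw [mul_div_cancel_left₀ y two_ne_zero, sinh_two_mul, add_assoc, one_add_cosh_two_mul]
  nlinarith [mul_le_mul_of_nonneg_left hy hc.le]

theorem sinh_div_self_le {x : ℝ} (hx : 0 < x) :
    sinh x / x ≤ 1 / 2 * cosh (x / 2) + 1 / 4 * (1 + cosh x) := by
  rw [div_le_iff₀ hx]
  linarith [four_mul_sinh_le hx.le]

end Real

theorem stmt_9 :
    (∀ x : ℝ, x ≠ 0 →
      Real.sinh x / x ≤ (1/2) * Real.cosh (x/2) + (1/4) * (1 + Real.cosh x)) ∧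
    (∀ x : ℝ, 0 ≤ x →
      4 * Real.sinh x ≤ x * (2 * Real.cosh (x/2) + 1 + Real.cosh x)) := by
  refine ⟨fun x hx ↦ ?_, fun x ↦ Real.four_mul_sinh_le⟩
  rcases hx.lt_or_gt with hneg | hpos
  · have h := Real.sinh_div_self_le (neg_pos.mpr hneg)
    rwa [Real.sinh_neg, neg_div_neg_eq, neg_div, Real.cosh_neg, Real.cosh_neg] at h
  · exact Real.sinh_div_self_le hpos
end

section
/- For $n \times n$ positive definite complex matrices $A, B$ and any $X \in M_n(\mathbb{C})$, if $3/8 \le \nu \le 5/8$ and $1/2 \le \beta \le 1$, then $\|\tfrac{1}{2}(A^\nu X B^{1-\nu}+A^{1-\nu}XB^\nu)\|_2 \le \|(1-\beta)A^{1/2}XB^{1/2} + \tfrac{\beta}{2}(A^{1/4}XB^{3/4}+A^{3/4}XB^{1/4})\|_2$, where $\|\cdot\|_2$ is the Hilbert–Schmidt (Frobenius) norm. -/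
open Matrix
open scoped ComplexOrder

/-- Real power of a Hermitian matrix via its spectral decomposition. -/
noncomputable def Matrix.IsHermitian.rpow {n : ℕ} {A : Matrix (Fin n) (Fin n) ℂ}
    (hA : A.IsHermitian) (ν : ℝ) : Matrix (Fin n) (Fin n) ℂ :=
  (hA.eigenvectorUnitary : Matrix (Fin n) (Fin n) ℂ) *
    Matrix.diagonal (fun i => ((hA.eigenvalues i ^ ν : ℝ) : ℂ)) *
      star (hA.eigenvectorUnitary : Matrix (Fin n) (Fin n) ℂ)

/-- The Hilbert–Schmidt (Frobenius) norm of a complex matrix. -/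
noncomputable def frobNorm {n : ℕ} (M : Matrix (Fin n) (Fin n) ℂ) : ℝ :=
  Real.sqrt (∑ i, ∑ j, ‖M i j‖ ^ 2)

/-!
Conjugating by the eigenvector unitaries `U` of `A` and `V` of `B` leaves the Hilbert–Schmidt norm
unchanged and turns `A ^ s * X * B ^ t` into the matrix with entries `λᵢ ^ s * μⱼ ^ t * Yᵢⱼ`, where
`Y = U⋆ X V`. Both sides thus become Schur multipliers of `Y`, and the inequality reduces to the
scalar one between Heinz means `H_ν(a, b) ≤ (1 - β) H_{1/2}(a, b) + β H_{1/4}(a, b)`.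
Writing `a = eˣ`, `b = eʸ` and `d = x - y`, one has `H_ν(a, b) = e^{(x+y)/2} cosh ((ν - 1/2) d)`,
and `cosh ((ν - 1/2) d) ≤ cosh (d / 8) ≤ (1 - β) + β cosh (d / 4)` as `|ν - 1/2| ≤ 1/8`.
-/

section frobNorm

variable {n : ℕ}

theorem frobNorm_le_frobNorm_of_norm_le {M N : Matrix (Fin n) (Fin n) ℂ}
    (h : ∀ i j, ‖M i j‖ ≤ ‖N i j‖) : frobNorm M ≤ frobNorm N :=
  Real.sqrt_le_sqrt <| Finset.sum_le_sum fun i _ => Finset.sum_le_sum fun j _ =>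
    pow_le_pow_left₀ (norm_nonneg _) (h i j) 2

theorem frobNorm_eq_sqrt_re_trace (M : Matrix (Fin n) (Fin n) ℂ) :
    frobNorm M = Real.sqrt (Mᴴ * M).trace.re := by
  simp only [frobNorm, trace, diag_apply, mul_apply, conjTranspose_apply, Complex.re_sum,
    Complex.star_def, ← Complex.normSq_eq_conj_mul_self, Complex.ofReal_re,
    Complex.normSq_eq_norm_sq]
  rw [Finset.sum_comm]

theorem frobNorm_star_mul_mul {U V : Matrix (Fin n) (Fin n) ℂ} (hU : U ∈ unitaryGroup (Fin n) ℂ)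
    (hV : V ∈ unitaryGroup (Fin n) ℂ) (M : Matrix (Fin n) (Fin n) ℂ) :
    frobNorm (star U * M * V) = frobNorm M := by
  simp only [frobNorm_eq_sqrt_re_trace, ← star_eq_conjTranspose, star_mul, star_star]
  congr 2
  calc (star V * (star M * U) * (star U * M * V)).trace
      = (star V * (star M * (U * star U) * M * V)).trace := by simp only [Matrix.mul_assoc]
    _ = (star M * M * (V * star V)).trace := by
        rw [Unitary.mul_star_self_of_mem hU, Matrix.mul_one, trace_mul_comm]
        simp only [Matrix.mul_assoc]
    _ = (star M * M).trace := by rw [Unitary.mul_star_self_of_mem hV, Matrix.mul_one]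

end frobNorm

section Heinz

open Real

/-- For `c = cosh x ≥ 1` the difference of the two sides is `(c - 1) (2β (c + 1) - 1)`. -/
theorem Real.cosh_le_one_sub_add_mul_cosh_two_mul {β : ℝ} (hβ : 1 / 4 ≤ β) (x : ℝ) :
    cosh x ≤ (1 - β) + β * cosh (2 * x) := by
  have hx := one_le_cosh x
  rw [cosh_two_mul, sinh_sq]
  nlinarith [mul_nonneg (sub_nonneg.2 hx) (by nlinarith : (0 : ℝ) ≤ 2 * β * (cosh x + 1) - 1)]

noncomputable def heinzMean (ν a b : ℝ) : ℝ := (a ^ ν * b ^ (1 - ν) + a ^ (1 - ν) * b ^ ν) / 2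

theorem heinzMean_exp (ν x y : ℝ) :
    heinzMean ν (exp x) (exp y) = exp ((x + y) / 2) * cosh ((ν - 1 / 2) * (x - y)) := by
  simp only [heinzMean, ← exp_mul, cosh_eq, mul_div_assoc', mul_add, ← exp_add]
  ring_nf

theorem heinzMean_le_one_sub_mul_add_mul {ν β a b : ℝ} (ha : 0 < a) (hb : 0 < b)
    (hν : |ν - 1 / 2| ≤ 1 / 8) (hβ : 1 / 4 ≤ β) :
    heinzMean ν a b ≤ (1 - β) * heinzMean (1 / 2) a b + β * heinzMean (1 / 4) a b := by
  rw [← exp_log ha, ← exp_log hb, heinzMean_exp, heinzMean_exp, heinzMean_exp]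
  set d := log a - log b
  have hd : |(ν - 1 / 2) * d| ≤ |d / 8| := by
    rw [abs_mul, abs_div, abs_of_pos (by norm_num : (0 : ℝ) < 8)]
    nlinarith [abs_nonneg d]
  calc exp ((log a + log b) / 2) * cosh ((ν - 1 / 2) * d)
      ≤ exp ((log a + log b) / 2) * ((1 - β) + β * cosh (2 * (d / 8))) :=
        mul_le_mul_of_nonneg_left ((cosh_le_cosh.2 hd).trans
          (cosh_le_one_sub_add_mul_cosh_two_mul hβ _)) (exp_pos _).le
    _ = _ := by
        rw [show (1 / 2 - 1 / 2 : ℝ) * d = 0 by ring,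
          show (1 / 4 - 1 / 2 : ℝ) * d = -(2 * (d / 8)) by ring, cosh_zero, cosh_neg]
        ring

end Heinz

theorem Matrix.IsHermitian.star_mul_rpow_mul_rpow_mul_apply {n : ℕ}
    {A B : Matrix (Fin n) (Fin n) ℂ} (hA : A.IsHermitian) (hB : B.IsHermitian)
    (X : Matrix (Fin n) (Fin n) ℂ) (s t : ℝ) (i j : Fin n) :
    (star (hA.eigenvectorUnitary : Matrix (Fin n) (Fin n) ℂ) * (hA.rpow s * X * hB.rpow t) *
        hB.eigenvectorUnitary) i j =
      ((hA.eigenvalues i ^ s * hB.eigenvalues j ^ t : ℝ) : ℂ) *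
        (star (hA.eigenvectorUnitary : Matrix (Fin n) (Fin n) ℂ) * X * hB.eigenvectorUnitary) i j := by
  have hU := Unitary.star_mul_self_of_mem hA.eigenvectorUnitary.2
  have hV := Unitary.star_mul_self_of_mem hB.eigenvectorUnitary.2
  simp only [Matrix.IsHermitian.rpow, Matrix.mul_assoc] at hU hV ⊢
  rw [← Matrix.mul_assoc (star _) (hA.eigenvectorUnitary : Matrix (Fin n) (Fin n) ℂ), hU,
    Matrix.one_mul, hV, Matrix.mul_one, diagonal_mul]
  simp only [← Matrix.mul_assoc, mul_diagonal]
  push_cast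
  ring

theorem stmt_13_general {n : ℕ} (A B X : Matrix (Fin n) (Fin n) ℂ)
    (hA : A.PosDef) (hB : B.PosDef) (ν β : ℝ)
    (hν1 : 3/8 ≤ ν) (hν2 : ν ≤ 5/8) (hβ1 : 1/2 ≤ β) :
    frobNorm ((1/2 : ℂ) •
        (hA.1.rpow ν * X * hB.1.rpow (1 - ν) + hA.1.rpow (1 - ν) * X * hB.1.rpow ν)) ≤
      frobNorm (((1 - β : ℝ) : ℂ) • (hA.1.rpow (1/2) * X * hB.1.rpow (1/2)) +
        ((β/2 : ℝ) : ℂ) •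
          (hA.1.rpow (1/4) * X * hB.1.rpow (3/4) + hA.1.rpow (3/4) * X * hB.1.rpow (1/4))) := by
  have hU := hA.1.eigenvectorUnitary.2
  have hV := hB.1.eigenvectorUnitary.2
  rw [← frobNorm_star_mul_mul hU hV, ← frobNorm_star_mul_mul hU hV (_ + _)]
  refine frobNorm_le_frobNorm_of_norm_le fun i j => ?_
  simp only [Matrix.mul_add, Matrix.add_mul, Matrix.mul_smul, Matrix.smul_mul, Matrix.add_apply,
    Matrix.smul_apply, hA.1.star_mul_rpow_mul_rpow_mul_apply hB.1, smul_eq_mul]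
  have hl := hA.eigenvalues_pos i
  have hm := hB.eigenvalues_pos j
  have hheinz := heinzMean_le_one_sub_mul_add_mul (ν := ν) hl hm
    (abs_le.2 ⟨by linarith, by linarith⟩) (by linarith : 1 / 4 ≤ β)
  norm_num [heinzMean] at hheinz
  rw [show ∀ (y : ℂ) (a b : ℝ), 1 / 2 * ((a : ℂ) * y + b * y) = ((a + b) / 2 : ℝ) * y from
      fun _ _ _ => by push_cast; ring,
    show ∀ (y : ℂ) (c d e : ℝ), ((1 - β : ℝ) : ℂ) * (c * y) + ((β / 2 : ℝ) : ℂ) * (d * y + e * y) =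
      ((1 - β) * c + β * ((d + e) / 2) : ℝ) * y from fun _ _ _ _ => by push_cast; ring,
    norm_mul, norm_mul, Complex.norm_real, Complex.norm_real]
  gcongr
  rw [Real.norm_of_nonneg (by positivity)]
  exact le_trans (by linarith) (Real.le_norm_self _)

theorem stmt_13 {n : ℕ} (A B X : Matrix (Fin n) (Fin n) ℂ)
    (hA : A.PosDef) (hB : B.PosDef) (ν β : ℝ)
    (hν1 : 3/8 ≤ ν) (hν2 : ν ≤ 5/8) (hβ1 : 1/2 ≤ β) (hβ2 : β ≤ 1) :
    frobNorm ((1/2 : ℂ) •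
        (hA.1.rpow ν * X * hB.1.rpow (1 - ν) + hA.1.rpow (1 - ν) * X * hB.1.rpow ν)) ≤
      frobNorm (((1 - β : ℝ) : ℂ) • (hA.1.rpow (1/2) * X * hB.1.rpow (1/2)) +
        ((β/2 : ℝ) : ℂ) •
          (hA.1.rpow (1/4) * X * hB.1.rpow (3/4) + hA.1.rpow (3/4) * X * hB.1.rpow (1/4))) :=
  stmt_13_general A B X hA hB ν β hν1 hν2 hβ1
end
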